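/- arXiv:2604.23451 — 2 statements merged into one kernel-verified Lean document; each statement's English description precedes it below -/
import Mathlib

section
/- Let p, q be probability mass functions on a finite type with supp(p) ⊆ supp(q), let L > 0, ρ(x) = log₂(p(x)/q(x)), p_min = min_{x ∈ supp(p)} p(x), and q_min = min_{x ∈ supp(q)} q(x). Then |η_L(p,q)| ≤ (log₂(1/p_min) + log₂(1/q_min)) · Σ_{x ∈ supp(p), |ρ(x)| > L} p(x). -/
open Finset

/-- clipping-bias bound via minimum masses. -/
theorem clipping_bias_pmin_qmin {α : Type*} [Fintype α] (p q : α → ℝ)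
    (hp0 : ∀ x, 0 ≤ p x) (hp1 : ∑ x, p x = 1)
    (hq0 : ∀ x, 0 ≤ q x) (hq1 : ∑ x, q x = 1)
    (hsupp : ∀ x, p x ≠ 0 → q x ≠ 0)
    (hpne : (univ.filter (fun x => p x ≠ 0)).Nonempty)
    (hqne : (univ.filter (fun x => q x ≠ 0)).Nonempty)
    (L : ℝ) (hL : 0 < L) :
    |(∑ x ∈ univ.filter (fun x => p x ≠ 0), p x * Real.logb 2 (p x / q x)) -
        ∑ x ∈ univ.filter (fun x => p x ≠ 0),
          p x * max (-L) (min L (Real.logb 2 (p x / q x)))| ≤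
      (Real.logb 2 (1 / (univ.filter (fun x => p x ≠ 0)).inf' hpne p) +
        Real.logb 2 (1 / (univ.filter (fun x => q x ≠ 0)).inf' hqne q)) *
        ∑ x ∈ univ.filter (fun x => p x ≠ 0 ∧ L < |Real.logb 2 (p x / q x)|), p x := by
  set S := univ.filter (fun x => p x ≠ 0) with hSdef
  set ρ : α → ℝ := fun x => Real.logb 2 (p x / q x) with hρ
  set c : α → ℝ := fun x => max (-L) (min L (ρ x)) with hc
  set pm := S.inf' hpne p with hpm
  set qm := (univ.filter (fun x => q x ≠ 0)).inf' hqne q with hqm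
  -- positivity of pm, qm
  obtain ⟨x0, hx0, hx0e⟩ := S.exists_mem_eq_inf' hpne p
  obtain ⟨y0, hy0, hy0e⟩ := (univ.filter (fun x => q x ≠ 0)).exists_mem_eq_inf' hqne q
  have hx0ne : p x0 ≠ 0 := (mem_filter.mp hx0).2
  have hy0ne : q y0 ≠ 0 := (mem_filter.mp hy0).2
  have hpm_pos : 0 < pm := by rw [hpm, hx0e]; exact lt_of_le_of_ne (hp0 x0) (Ne.symm hx0ne)
  have hqm_pos : 0 < qm := by rw [hqm, hy0e]; exact lt_of_le_of_ne (hq0 y0) (Ne.symm hy0ne)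
  have hp_le1 : ∀ x, p x ≤ 1 := by
    intro x
    calc p x ≤ ∑ y, p y := Finset.single_le_sum (fun y _ => hp0 y) (mem_univ x)
    _ = 1 := hp1
  have hq_le1 : ∀ x, q x ≤ 1 := by
    intro x
    calc q x ≤ ∑ y, q y := Finset.single_le_sum (fun y _ => hq0 y) (mem_univ x)
    _ = 1 := hq1
  have hpm_le1 : pm ≤ 1 := by rw [hpm, hx0e]; exact hp_le1 x0
  have hqm_le1 : qm ≤ 1 := by rw [hqm, hy0e]; exact hq_le1 y0
  set C := Real.logb 2 (1 / pm) + Real.logb 2 (1 / qm) with hC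
  have hlogp : 0 ≤ Real.logb 2 (1 / pm) := by
    apply Real.logb_nonneg one_lt_two
    rw [le_div_iff₀ hpm_pos]; linarith
  have hlogq : 0 ≤ Real.logb 2 (1 / qm) := by
    apply Real.logb_nonneg one_lt_two
    rw [le_div_iff₀ hqm_pos]; linarith
  -- bound on |ρ x| for x ∈ S
  have hρbound : ∀ x ∈ S, |ρ x| ≤ C := by
    intro x hx
    have hpx : p x ≠ 0 := (mem_filter.mp hx).2
    have hqx : q x ≠ 0 := hsupp x hpx
    have hpxpos : 0 < p x := lt_of_le_of_ne (hp0 x) (Ne.symm hpx)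
    have hqxpos : 0 < q x := lt_of_le_of_ne (hq0 x) (Ne.symm hqx)
    have hρeq : ρ x = Real.logb 2 (p x) - Real.logb 2 (q x) := by
      rw [hρ]; exact Real.logb_div hpx hqx
    have hpmle : pm ≤ p x := by rw [hpm]; exact Finset.inf'_le p hx
    have hqmle : qm ≤ q x := by
      rw [hqm]; exact Finset.inf'_le q (mem_filter.mpr ⟨mem_univ x, hqx⟩)
    have h1 : Real.logb 2 pm ≤ Real.logb 2 (p x) := Real.logb_le_logb_of_le one_lt_two hpm_pos hpmle
    have h2 : Real.logb 2 qm ≤ Real.logb 2 (q x) := Real.logb_le_logb_of_le one_lt_two hqm_pos hqmle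
    have h3 : Real.logb 2 (p x) ≤ 0 := Real.logb_nonpos one_lt_two (hp0 x) (hp_le1 x)
    have h4 : Real.logb 2 (q x) ≤ 0 := Real.logb_nonpos one_lt_two (hq0 x) (hq_le1 x)
    have hip : Real.logb 2 (1 / pm) = - Real.logb 2 pm := by
      rw [one_div, Real.logb_inv]
    have hiq : Real.logb 2 (1 / qm) = - Real.logb 2 qm := by
      rw [one_div, Real.logb_inv]
    rw [abs_le]
    constructor <;> rw [hρeq] <;> rw [hC, hip, hiq] <;> linarith
  -- |ρ - c| ≤ |ρ|, and zero when |ρ| ≤ L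
  have hdiff : ∀ x, |ρ x - c x| ≤ |ρ x| := by
    intro x
    simp only [hc]
    rcases le_total (ρ x) L with h | h
    · rcases le_total (-L) (ρ x) with h' | h'
      · simp [min_eq_right h, max_eq_right h']
      · rw [min_eq_right h, max_eq_left (by linarith)]
        rw [abs_of_nonpos (by linarith), abs_of_nonpos (by linarith)]
        linarith
    · rw [min_eq_left h, max_eq_right (by linarith)]
      rw [abs_of_nonneg (by linarith), abs_of_nonneg (by linarith)]
      linarith
  have hdiff0 : ∀ x, |ρ x| ≤ L → ρ x - c x = 0 := by
    intro x hx
    rw [abs_le] at hx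
    simp only [hc]
    rw [min_eq_right hx.2, max_eq_right hx.1]
    ring
  have hstep : (∑ x ∈ S, p x * ρ x) - ∑ x ∈ S, p x * c x
      = ∑ x ∈ S, p x * (ρ x - c x) := by
    rw [← Finset.sum_sub_distrib]; exact Finset.sum_congr rfl (fun x _ => by ring)
  rw [hstep]
  have hfilter : univ.filter (fun x => p x ≠ 0 ∧ L < |ρ x|) = S.filter (fun x => L < |ρ x|) := by
    rw [hSdef, Finset.filter_filter]
  rw [hfilter]
  calc |∑ x ∈ S, p x * (ρ x - c x)| ≤ ∑ x ∈ S, |p x * (ρ x - c x)| :=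
        Finset.abs_sum_le_sum_abs _ _
    _ = ∑ x ∈ S.filter (fun x => L < |ρ x|), |p x * (ρ x - c x)| := by
        refine (Finset.sum_filter_of_ne ?_).symm
        intro x hx hne
        by_contra hcon
        push_neg at hcon
        exact hne (by rw [hdiff0 x hcon, mul_zero, abs_zero])
    _ ≤ ∑ x ∈ S.filter (fun x => L < |ρ x|), C * p x := by
        apply Finset.sum_le_sum
        intro x hx
        have hxS := (mem_filter.mp hx).1
        rw [abs_mul, abs_of_nonneg (hp0 x), mul_comm]
        exact mul_le_mul_of_nonneg_right ((hdiff x).trans (hρbound x hxS)) (hp0 x)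
    _ = C * ∑ x ∈ S.filter (fun x => L < |ρ x|), p x := by rw [Finset.mul_sum]
end

section
/- There exist a finite type α, probability mass functions p, q on α with supp(p) ⊆ supp(q), and a clip bound L > 0, such that the clipped KL expectation D_{KL,L}(p‖q) = Σ_{x ∈ supp(p)} p(x)·clip_L(log₂(p(x)/q(x))) is strictly negative. In particular, D_{KL,L} is not a nonnegative divergence, even though the unclipped KL divergence D_KL(p‖q) is always nonnegative. -/
open Finset

lemma aux_log_ten : (1:ℝ)/10 ≤ Real.logb 2 10 := by
  have h1 : (1:ℝ) ≤ Real.logb 2 10 := by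
    have := Real.logb_self_eq_one (b := 2) (by norm_num)
    calc (1:ℝ) = Real.logb 2 2 := this.symm
      _ ≤ Real.logb 2 10 := Real.logb_le_logb_of_le (by norm_num) (by norm_num) (by norm_num)
  linarith

lemma aux_log_neg : Real.logb 2 ((10:ℝ)/11) ≤ -(1/10) := by
  have hlog2 : Real.log 2 ≤ 10 * Real.log (11/10) := by
    have h : Real.log ((2:ℝ)) ≤ Real.log (((11:ℝ)/10)^10) := by
      apply Real.log_le_log (by norm_num)
      norm_num
    rwa [Real.log_pow] at h
    
  have hl2pos : 0 < Real.log 2 := Real.log_pos (by norm_num)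
  rw [Real.logb, div_le_iff₀ hl2pos]
  have : Real.log ((10:ℝ)/11) = - Real.log (11/10) := by
    rw [← Real.log_inv]; norm_num
  rw [this]
  linarith

/-- the clipped KL expectation can be strictly negative. -/
theorem clipped_kl_can_be_negative :
    ∃ (n : ℕ) (p q : Fin n → ℝ) (L : ℝ),
      (∀ x, 0 ≤ p x) ∧ (∑ x, p x = 1) ∧
      (∀ x, 0 ≤ q x) ∧ (∑ x, q x = 1) ∧
      (∀ x, p x ≠ 0 → q x ≠ 0) ∧ 0 < L ∧
      (∑ x ∈ univ.filter (fun x => p x ≠ 0),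
          p x * max (-L) (min L (Real.logb 2 (p x / q x)))) < 0 := by
  refine ⟨2, ![1/10, 9/10], ![1/100, 99/100], 1/10, ?_, ?_, ?_, ?_, ?_, by norm_num, ?_⟩
  · intro x; fin_cases x <;> norm_num
  · simp [Fin.sum_univ_two]; norm_num
  · intro x; fin_cases x <;> norm_num
  · simp [Fin.sum_univ_two]; norm_num
  · intro x; fin_cases x <;> norm_num
  · have hfilter : (univ.filter (fun x => (![1/10, 9/10] : Fin 2 → ℝ) x ≠ 0)) = univ := by
      ext x; fin_cases x <;> simp
    rw [hfilter, Fin.sum_univ_two]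
    have e0 : ((![1/10, 9/10] : Fin 2 → ℝ) 0 / (![1/100, 99/100] : Fin 2 → ℝ) 0) = 10 := by
      norm_num
    have e1 : ((![1/10, 9/10] : Fin 2 → ℝ) 1 / (![1/100, 99/100] : Fin 2 → ℝ) 1) = 10/11 := by
      norm_num
    rw [e0, e1]
    have h0 : min ((1:ℝ)/10) (Real.logb 2 10) = 1/10 := min_eq_left aux_log_ten
    have h1 : max (-((1:ℝ)/10)) (min (1/10) (Real.logb 2 (10/11))) = -(1/10) := by
      have hneg : Real.logb 2 ((10:ℝ)/11) ≤ 1/10 := le_trans aux_log_neg (by norm_num)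
      rw [min_eq_right hneg, max_eq_left aux_log_neg]
    rw [h0, h1, max_eq_right (by norm_num : -((1:ℝ)/10) ≤ 1/10)]
    simp only [Matrix.cons_val_zero, Matrix.cons_val_one, Matrix.head_cons]
    norm_num
end
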